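/- arXiv:2001.02565 — 6 statements merged into one kernel-verified Lean document; each statement's English description precedes it below -/
import Mathlib

section
/- For parameters c = 2b+1, the Basener–Ross system admits the Darboux first integral H(x,y) = x^{2b}((2b+1)y² − 2(2b+1)y + 2x). Precisely: let b, c ∈ ℝ with c = 2b+1, let I ⊆ ℝ be an open interval and let x, y : ℝ → ℝ be differentiable on I with x'(t) = x(t)(1 − y(t)), y'(t) = b·y(t)² + (1−c)·y(t) + x(t) and x(t) > 0 for all t ∈ I. Then the function t ↦ x(t)^{2b}·((2b+1)·y(t)² − 2(2b+1)·y(t) + 2x(t)) is constant on I. -/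
/-!
`H = x^{2b} F` with `F = (2b+1) y² − 2(2b+1) y + 2x`. Along the flow both factors are Darboux
functions: `ẋ = (1 − y) x` and, exactly when `c = 2b+1`, `Ḟ = −2b (1 − y) F`. The cofactor of
`x^{2b}` is `2b (1 − y)`, which cancels that of `F`, so `Ḣ = 0`; a function with vanishing
derivative on an interval is constant.
-/

theorem IsPreconnected.eq_of_forall_hasDerivAt_zero {E : Type*} [NormedAddCommGroup E]
    [NormedSpace ℝ E] {s : Set ℝ} (hs : IsPreconnected s) {f : ℝ → E}
    (hf : ∀ t ∈ s, HasDerivAt f 0 t) {t t' : ℝ} (ht : t ∈ s) (ht' : t' ∈ s) : f t = f t' := by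
  have hle := hs.ordConnected.convex.norm_image_sub_le_of_norm_hasDerivWithin_le
    (fun u hu => (hf u hu).hasDerivWithinAt) (fun _ _ => norm_zero.le) ht' ht
  rw [zero_mul, norm_le_zero_iff, sub_eq_zero] at hle
  exact hle

theorem HasDerivAt.rpow_mul_of_cofactor {u v : ℝ → ℝ} {k a t : ℝ}
    (hu : HasDerivAt u (u t * k) t) (hv : HasDerivAt v (-(a * k) * v t) t) (hut : u t ≠ 0) :
    HasDerivAt (fun s => u s ^ a * v s) 0 t := by
  have hpow : u t ^ (a - 1) * u t = u t ^ a := by rw [← Real.rpow_add_one hut, sub_add_cancel]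
  refine ((hu.rpow_const (Or.inl hut)).mul hv).congr_deriv ?_
  linear_combination a * k * v t * hpow

theorem basenerRoss_hasDerivAt_quadric {b : ℝ} {x y : ℝ → ℝ} {t : ℝ}
    (hx : HasDerivAt x (x t * (1 - y t)) t) (hy : HasDerivAt y (b * y t ^ 2 - 2 * b * y t + x t) t) :
    HasDerivAt (fun s => (2 * b + 1) * y s ^ 2 - 2 * (2 * b + 1) * y s + 2 * x s)
      (-(2 * b * (1 - y t)) * ((2 * b + 1) * y t ^ 2 - 2 * (2 * b + 1) * y t + 2 * x t)) t := by
  refine ((((hy.pow 2).const_mul _).sub (hy.const_mul _)).add (hx.const_mul 2)).congr_deriv ?_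
  push_cast
  ring

theorem basener_ross_darboux_first_integral_general
    (b c : ℝ) (hc : c = 2 * b + 1)
    (I : Set ℝ) (hIconn : IsPreconnected I)
    (x y : ℝ → ℝ)
    (hx : ∀ t ∈ I, HasDerivAt x (x t * (1 - y t)) t)
    (hy : ∀ t ∈ I, HasDerivAt y (b * y t ^ 2 + (1 - c) * y t + x t) t)
    (hxpos : ∀ t ∈ I, 0 < x t) :
    ∀ t ∈ I, ∀ t' ∈ I,
      x t ^ (2 * b) * ((2 * b + 1) * y t ^ 2 - 2 * (2 * b + 1) * y t + 2 * x t) =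
        x t' ^ (2 * b) * ((2 * b + 1) * y t' ^ 2 - 2 * (2 * b + 1) * y t' + 2 * x t') := by
  have hy' : ∀ t ∈ I, HasDerivAt y (b * y t ^ 2 - 2 * b * y t + x t) t := fun t ht =>
    (hy t ht).congr_deriv (by rw [hc]; ring)
  have hH : ∀ t ∈ I, HasDerivAt (fun s => x s ^ (2 * b) *
      ((2 * b + 1) * y s ^ 2 - 2 * (2 * b + 1) * y s + 2 * x s)) 0 t := fun t ht =>
    (hx t ht).rpow_mul_of_cofactor (basenerRoss_hasDerivAt_quadric (hx t ht) (hy' t ht))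
      (hxpos t ht).ne'
  exact fun t ht t' ht' => hIconn.eq_of_forall_hasDerivAt_zero hH ht ht'

/-- For `c = 2b+1`, the Basener–Ross system `ẋ = x(1-y)`, `ẏ = b y² + (1-c) y + x`
admits the Darboux first integral
`H(x,y) = x^(2b) ((2b+1) y² − 2(2b+1) y + 2x)`:
along every solution with `x > 0` on an open interval, `H(x(t), y(t))` is constant. -/
theorem basener_ross_darboux_first_integral
    (b c : ℝ) (hc : c = 2 * b + 1)
    (I : Set ℝ) (hIopen : IsOpen I) (hIconn : IsPreconnected I)
    (x y : ℝ → ℝ)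
    (hx : ∀ t ∈ I, HasDerivAt x (x t * (1 - y t)) t)
    (hy : ∀ t ∈ I, HasDerivAt y (b * y t ^ 2 + (1 - c) * y t + x t) t)
    (hxpos : ∀ t ∈ I, 0 < x t) :
    ∀ t ∈ I, ∀ t' ∈ I,
      x t ^ (2 * b) * ((2 * b + 1) * y t ^ 2 - 2 * (2 * b + 1) * y t + 2 * x t) =
        x t' ^ (2 * b) * ((2 * b + 1) * y t' ^ 2 - 2 * (2 * b + 1) * y t' + 2 * x t') :=
  basener_ross_darboux_first_integral_general b c hc I hIconn x y hx hy hxpos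
end

section
/- For c = 1/2 and b = −1/4, the Basener–Ross system admits the Darboux invariant I₁ = x^{−1/2}(y² + 4x)·e^{−t/2}. Precisely: let I ⊆ ℝ be an open interval and x, y : ℝ → ℝ differentiable on I with x'(t) = x(t)(1 − y(t)), y'(t) = −(1/4)·y(t)² + (1/2)·y(t) + x(t) and x(t) > 0 for all t ∈ I. Then the function t ↦ x(t)^{−1/2}·(y(t)² + 4x(t))·Real.exp(−t/2) is constant on I. -/
/-!
`F = y² + 4x` is a Darboux polynomial of the system with cofactor `1 - y/2`, and `x` is one
with cofactor `1 - y`. Along a solution, `x^(-1/2) F e^(-t/2)` therefore has logarithmic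
derivative `-(1 - y)/2 + (1 - y/2) - 1/2 = 0`, so it is constant on the connected interval.
-/

open Real

theorem HasDerivAt.mul_of_logDeriv {f g : ℝ → ℝ} {k m t : ℝ}
    (hf : HasDerivAt f (k * f t) t) (hg : HasDerivAt g (m * g t) t) :
    HasDerivAt (fun s => f s * g s) ((k + m) * (f t * g t)) t :=
  (hf.mul hg).congr_deriv (by ring)

theorem HasDerivAt.rpow_const_of_logDeriv {f : ℝ → ℝ} {k t : ℝ} (p : ℝ)
    (hf : HasDerivAt f (k * f t) t) (hft : 0 < f t) :
    HasDerivAt (fun s => f s ^ p) (p * k * f t ^ p) t := by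
  refine (hf.rpow_const (Or.inl hft.ne')).congr_deriv ?_
  rw [Real.rpow_sub_one hft.ne']
  field_simp

theorem hasDerivAt_exp_neg_div_two (t : ℝ) :
    HasDerivAt (fun s => exp (-s / 2)) (-(1 / 2) * exp (-t / 2)) t := by
  have hlin : HasDerivAt (fun s : ℝ => -s / 2) (-1 / 2) t := by
    simpa using (hasDerivAt_id t).neg.div_const 2
  exact hlin.exp.congr_deriv (by ring)

theorem hasDerivAt_sq_add_four_mul_of_basenerRoss {x y : ℝ → ℝ} {t : ℝ}
    (hx : HasDerivAt x (x t * (1 - y t)) t)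
    (hy : HasDerivAt y (-(1/4) * y t ^ 2 + (1/2) * y t + x t) t) :
    HasDerivAt (fun s => y s ^ 2 + 4 * x s) ((1 - y t / 2) * (y t ^ 2 + 4 * x t)) t :=
  ((hy.pow 2).add (hx.const_mul 4)).congr_deriv (by ring)

/-- For `c = 1/2`, `b = −1/4`, the Basener–Ross system `ẋ = x(1-y)`,
`ẏ = −(1/4) y² + (1/2) y + x` admits the Darboux invariant
`I₁ = x^(−1/2) (y² + 4x) e^(−t/2)`: along every solution with `x > 0` on an open
interval, `I₁(x(t), y(t), t)` is constant. -/
theorem basener_ross_darboux_invariant_I1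
    (I : Set ℝ) (hIopen : IsOpen I) (hIconn : IsPreconnected I)
    (x y : ℝ → ℝ)
    (hx : ∀ t ∈ I, HasDerivAt x (x t * (1 - y t)) t)
    (hy : ∀ t ∈ I, HasDerivAt y (-(1/4) * y t ^ 2 + (1/2) * y t + x t) t)
    (hxpos : ∀ t ∈ I, 0 < x t) :
    ∀ t ∈ I, ∀ t' ∈ I,
      x t ^ (-(1/2) : ℝ) * (y t ^ 2 + 4 * x t) * Real.exp (-t / 2) =
        x t' ^ (-(1/2) : ℝ) * (y t' ^ 2 + 4 * x t') * Real.exp (-t' / 2) := by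
  have hderiv : ∀ t ∈ I, HasDerivAt
      (fun s => x s ^ (-(1/2) : ℝ) * (y s ^ 2 + 4 * x s) * exp (-s / 2)) 0 t := by
    intro t ht
    have hxpow := HasDerivAt.rpow_const_of_logDeriv (-(1/2))
      ((hx t ht).congr_deriv (mul_comm _ _)) (hxpos t ht)
    have hI₁ := (hxpow.mul_of_logDeriv
      (hasDerivAt_sq_add_four_mul_of_basenerRoss (hx t ht) (hy t ht))).mul_of_logDeriv
      (hasDerivAt_exp_neg_div_two t)
    exact hI₁.congr_deriv (by ring)
  intro t ht t' ht'
  exact hIopen.is_const_of_deriv_eq_zero hIconn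
    (fun s hs => (hderiv s hs).differentiableAt.differentiableWithinAt)
    (fun s hs => (hderiv s hs).deriv) ht ht'
end

section
/- For c = 1/2 and b = −1/4, the Basener–Ross system admits the Darboux invariant I₂ = x^{−1/2}((y−2)² + 4x)·e^{t/2}. Precisely: let I ⊆ ℝ be an open interval and x, y : ℝ → ℝ differentiable on I with x'(t) = x(t)(1 − y(t)), y'(t) = −(1/4)·y(t)² + (1/2)·y(t) + x(t) and x(t) > 0 for all t ∈ I. Then the function t ↦ x(t)^{−1/2}·((y(t) − 2)² + 4x(t))·Real.exp(t/2) is constant on I. -/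
/-!
Both `x` and `P = (y - 2)² + 4x` are Darboux functions of the system: along a solution,
`x' = (1 - y) x` and `P' = -(y/2) P`. Cofactors of products of Darboux functions add up,
so `x^r P e^{t/c}` has cofactor `r (1 - y) - y/2 + 1/c`, which vanishes for `r = -1/2`, `c = 2`.
Hence `I₂` has zero derivative on the interval.
-/

open Real

section Cofactor

variable {f g : ℝ → ℝ} {a b t : ℝ}

theorem HasDerivAt.rpow_const_of_cofactor (hf : HasDerivAt f (a * f t) t) (hft : 0 < f t)
    (r : ℝ) : HasDerivAt (fun s => f s ^ r) (r * a * f t ^ r) t := by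
  refine (hf.rpow_const (Or.inl hft.ne')).congr_deriv ?_
  rw [rpow_sub_one hft.ne']
  field_simp

theorem HasDerivAt.mul_of_cofactor (hf : HasDerivAt f (a * f t) t)
    (hg : HasDerivAt g (b * g t) t) :
    HasDerivAt (fun s => f s * g s) ((a + b) * (f t * g t)) t :=
  (hf.mul hg).congr_deriv (by ring)

theorem hasDerivAt_exp_div (c t : ℝ) :
    HasDerivAt (fun s => exp (s / c)) (c⁻¹ * exp (t / c)) t :=
  ((hasDerivAt_id t).div_const c).exp.congr_deriv (by rw [id, mul_comm, one_div])

end Cofactor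

section BasenerRoss

variable {x y : ℝ → ℝ} {t : ℝ}

theorem basenerRoss_hasDerivAt_darboux_quadric
    (hx : HasDerivAt x (x t * (1 - y t)) t)
    (hy : HasDerivAt y (-(1/4) * y t ^ 2 + (1/2) * y t + x t) t) :
    HasDerivAt (fun s => (y s - 2) ^ 2 + 4 * x s)
      (-(y t / 2) * ((y t - 2) ^ 2 + 4 * x t)) t :=
  (((hy.sub_const 2).pow 2).add (hx.const_mul 4)).congr_deriv (by push_cast; ring)

theorem basenerRoss_hasDerivAt_I2_zero
    (hx : HasDerivAt x (x t * (1 - y t)) t)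
    (hy : HasDerivAt y (-(1/4) * y t ^ 2 + (1/2) * y t + x t) t) (hxt : 0 < x t) :
    HasDerivAt (fun s => x s ^ (-(1/2) : ℝ) * ((y s - 2) ^ 2 + 4 * x s) * exp (s / 2)) 0 t := by
  have hx_cofactor : HasDerivAt x ((1 - y t) * x t) t := by rwa [mul_comm] at hx
  have hI2 := ((hx_cofactor.rpow_const_of_cofactor hxt (-(1/2))).mul_of_cofactor
    (basenerRoss_hasDerivAt_darboux_quadric hx hy)).mul_of_cofactor (hasDerivAt_exp_div 2 t)
  exact hI2.congr_deriv (by ring)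

end BasenerRoss

/-- For `c = 1/2`, `b = −1/4`, the Basener–Ross system `ẋ = x(1-y)`,
`ẏ = −(1/4) y² + (1/2) y + x` admits the Darboux invariant
`I₂ = x^(−1/2) ((y−2)² + 4x) e^(t/2)`: along every solution with `x > 0` on an open
interval, `I₂(x(t), y(t), t)` is constant. -/
theorem basener_ross_darboux_invariant_I2
    (I : Set ℝ) (hIopen : IsOpen I) (hIconn : IsPreconnected I)
    (x y : ℝ → ℝ)
    (hx : ∀ t ∈ I, HasDerivAt x (x t * (1 - y t)) t)
    (hy : ∀ t ∈ I, HasDerivAt y (-(1/4) * y t ^ 2 + (1/2) * y t + x t) t)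
    (hxpos : ∀ t ∈ I, 0 < x t) :
    ∀ t ∈ I, ∀ t' ∈ I,
      x t ^ (-(1/2) : ℝ) * ((y t - 2) ^ 2 + 4 * x t) * Real.exp (t / 2) =
        x t' ^ (-(1/2) : ℝ) * ((y t' - 2) ^ 2 + 4 * x t') * Real.exp (t' / 2) := by
  intro t ht t' ht'
  have hI2 : ∀ s ∈ I, HasDerivAt
      (fun s => x s ^ (-(1/2) : ℝ) * ((y s - 2) ^ 2 + 4 * x s) * exp (s / 2)) 0 s :=
    fun s hs => basenerRoss_hasDerivAt_I2_zero (hx s hs) (hy s hs) (hxpos s hs)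
  exact hIopen.is_const_of_deriv_eq_zero hIconn
    (fun s hs => (hI2 s hs).differentiableAt.differentiableWithinAt)
    (fun s hs => (hI2 s hs).deriv) ht ht'
end

section
/- For b = (1−c)/(2c−3) (with c ≠ 3/2), the Basener–Ross system admits the Darboux invariant I₃ = x^{2(1−c)/(2c−3)}·((y − (3−2c))² + 2(3−2c)x)·exp(2(1−c)t/(3−2c)). Precisely: let c ∈ ℝ with c ≠ 3/2, set b = (1−c)/(2c−3), let I ⊆ ℝ be an open interval and x, y : ℝ → ℝ differentiable on I with x'(t) = x(t)(1 − y(t)), y'(t) = b·y(t)² + (1−c)·y(t) + x(t) and x(t) > 0 for all t ∈ I. Then the function t ↦ x(t)^{2(1−c)/(2c−3)}·((y(t) − (3−2c))² + 2(3−2c)·x(t))·Real.exp(2(1−c)·t/(3−2c)) is constant on I. -/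
/-!
Along a solution, `x` has logarithmic derivative `1 - y`, and when `b (3 - 2c) = c - 1` the
quadric `P = (y - (3 - 2c))² + 2(3 - 2c) x` is a Darboux function with cofactor `2 b y`.
Hence `x ^ α * P * exp (k t)` has logarithmic derivative `α (1 - y) + 2 b y + k`, which vanishes
identically for `α = 2b`, `k = -2b`; a function with zero derivative on a preconnected subset
of `ℝ` is constant there.
-/

open Real

theorem IsPreconnected.eq_of_hasDerivAt_zero {E : Type*} [NormedAddCommGroup E] [NormedSpace ℝ E]
    {f : ℝ → E} {s : Set ℝ} (hs : IsPreconnected s) (hf : ∀ t ∈ s, HasDerivAt f 0 t)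
    {a b : ℝ} (ha : a ∈ s) (hb : b ∈ s) : f a = f b := by
  have := hs.convex.norm_image_sub_le_of_norm_hasDerivWithin_le
    (fun t ht => (hf t ht).hasDerivWithinAt) (fun _ _ => norm_zero.le) ha hb
  simpa [sub_eq_zero, eq_comm] using this

theorem HasDerivAt.rpow_mul_mul_exp_of_cofactor {x P g : ℝ → ℝ} {K₁ K₂ k α t : ℝ}
    (hx : HasDerivAt x (x t * K₁) t) (hx0 : x t ≠ 0) (hP : HasDerivAt P (P t * K₂) t)
    (hg : HasDerivAt g k t) :
    HasDerivAt (fun s => x s ^ α * P s * Real.exp (g s))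
      (x t ^ α * P t * Real.exp (g t) * (α * K₁ + K₂ + k)) t := by
  refine (((hx.rpow_const (p := α) (Or.inl hx0)).mul hP).mul hg.exp).congr_deriv ?_
  rw [rpow_sub_one hx0]
  simp only [Pi.mul_apply]
  field_simp

theorem hasDerivAt_basenerRoss_darboux {b c : ℝ} {x y : ℝ → ℝ} {t : ℝ}
    (hb : b * (3 - 2 * c) = c - 1) (hx : HasDerivAt x (x t * (1 - y t)) t)
    (hy : HasDerivAt y (b * y t ^ 2 + (1 - c) * y t + x t) t) :
    HasDerivAt (fun s => (y s - (3 - 2 * c)) ^ 2 + 2 * (3 - 2 * c) * x s)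
      (((y t - (3 - 2 * c)) ^ 2 + 2 * (3 - 2 * c) * x t) * (2 * b * y t)) t := by
  refine (((hy.sub_const _).pow 2).add (hx.const_mul _)).congr_deriv ?_
  push_cast
  linear_combination (2 * y t ^ 2 - 2 * (3 - 2 * c) * y t - 4 * x t * y t) * hb

theorem basener_ross_darboux_invariant_I3_general
    (c : ℝ) (hc : c ≠ 3 / 2) (b : ℝ) (hb : b = (1 - c) / (2 * c - 3))
    (I : Set ℝ) (hIconn : IsPreconnected I)
    (x y : ℝ → ℝ)
    (hx : ∀ t ∈ I, HasDerivAt x (x t * (1 - y t)) t)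
    (hy : ∀ t ∈ I, HasDerivAt y (b * y t ^ 2 + (1 - c) * y t + x t) t)
    (hxpos : ∀ t ∈ I, 0 < x t) :
    ∀ t ∈ I, ∀ t' ∈ I,
      x t ^ (2 * (1 - c) / (2 * c - 3)) *
          ((y t - (3 - 2 * c)) ^ 2 + 2 * (3 - 2 * c) * x t) *
          Real.exp (2 * (1 - c) * t / (3 - 2 * c)) =
        x t' ^ (2 * (1 - c) / (2 * c - 3)) *
          ((y t' - (3 - 2 * c)) ^ 2 + 2 * (3 - 2 * c) * x t') *
          Real.exp (2 * (1 - c) * t' / (3 - 2 * c)) := by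
  have hd : 2 * c - 3 ≠ 0 := fun h => hc (by linarith)
  have hb' : b * (3 - 2 * c) = c - 1 := by rw [hb, div_mul_eq_mul_div, div_eq_iff hd]; ring
  have hrpow : 2 * (1 - c) / (2 * c - 3) = 2 * b := by rw [hb]; ring
  have hg (s : ℝ) : HasDerivAt (fun s => 2 * (1 - c) * s / (3 - 2 * c)) (-(2 * b)) s := by
    have hexp : 2 * (1 - c) * 1 / (3 - 2 * c) = -(2 * b) := by
      rw [hb, ← neg_sub (2 * c) 3, div_neg]; ring
    exact hexp ▸ ((hasDerivAt_id s).const_mul _).div_const _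
  have hderiv : ∀ s ∈ I, HasDerivAt (fun s => x s ^ (2 * (1 - c) / (2 * c - 3)) *
      ((y s - (3 - 2 * c)) ^ 2 + 2 * (3 - 2 * c) * x s) *
      Real.exp (2 * (1 - c) * s / (3 - 2 * c))) 0 s := fun s hs =>
    ((hx s hs).rpow_mul_mul_exp_of_cofactor (hxpos s hs).ne'
      (hasDerivAt_basenerRoss_darboux hb' (hx s hs) (hy s hs)) (hg s)).congr_deriv
      (by rw [hrpow]; ring)
  exact fun t ht t' ht' => hIconn.eq_of_hasDerivAt_zero hderiv ht ht'

/-- For `b = (1−c)/(2c−3)` (with `c ≠ 3/2`), the Basener–Ross system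
`ẋ = x(1-y)`, `ẏ = b y² + (1-c) y + x` admits the Darboux invariant
`I₃ = x^(2(1−c)/(2c−3)) ((y − (3−2c))² + 2(3−2c)x) exp(2(1−c)t/(3−2c))`:
along every solution with `x > 0` on an open interval it is constant. -/
theorem basener_ross_darboux_invariant_I3
    (c : ℝ) (hc : c ≠ 3 / 2) (b : ℝ) (hb : b = (1 - c) / (2 * c - 3))
    (I : Set ℝ) (hIopen : IsOpen I) (hIconn : IsPreconnected I)
    (x y : ℝ → ℝ)
    (hx : ∀ t ∈ I, HasDerivAt x (x t * (1 - y t)) t)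
    (hy : ∀ t ∈ I, HasDerivAt y (b * y t ^ 2 + (1 - c) * y t + x t) t)
    (hxpos : ∀ t ∈ I, 0 < x t) :
    ∀ t ∈ I, ∀ t' ∈ I,
      x t ^ (2 * (1 - c) / (2 * c - 3)) *
          ((y t - (3 - 2 * c)) ^ 2 + 2 * (3 - 2 * c) * x t) *
          Real.exp (2 * (1 - c) * t / (3 - 2 * c)) =
        x t' ^ (2 * (1 - c) / (2 * c - 3)) *
          ((y t' - (3 - 2 * c)) ^ 2 + 2 * (3 - 2 * c) * x t') *
          Real.exp (2 * (1 - c) * t' / (3 - 2 * c)) :=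
  basener_ross_darboux_invariant_I3_general c hc b hb I hIconn x y hx hy hxpos
end

section
/- Darboux criterion for first integrals (Theorem on Darboux integrability, statement (a)): let U ⊆ ℝ² be open, let P, Q : ℝ² → ℝ be continuous, let p ∈ ℕ, and for i = 1, …, p let fᵢ : ℝ² → ℝ be differentiable with fᵢ > 0 on U, let Kᵢ : ℝ² → ℝ, and suppose P·∂fᵢ/∂x + Q·∂fᵢ/∂y = Kᵢ·fᵢ on U. Let λ₁, …, λ_p ∈ ℝ and set F = ∏ᵢ fᵢ^{λᵢ} (real powers). Then Σᵢ λᵢ Kᵢ = 0 on U if and only if P·∂F/∂x + Q·∂F/∂y = 0 on U. -/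
/-!
Near a point where every `fᵢ` is positive, `F = exp (∑ λᵢ log fᵢ)`, so the logarithmic derivative
gives `DF = F · ∑ λᵢ Dfᵢ / fᵢ`. Evaluated on the field `(P, Q)`, each `Dfᵢ (P, Q) / fᵢ` is the
cofactor `Kᵢ`, hence `P ∂F/∂x + Q ∂F/∂y = F · ∑ λᵢ Kᵢ`, and `F > 0`.
-/

open Filter Finset Topology

theorem prod_rpow_eventuallyEq_exp_sum_log {E ι : Type*} [TopologicalSpace E] {s : Finset ι}
    {f : ι → E → ℝ} {z : E} {lam : ι → ℝ} (hf : ∀ i ∈ s, ContinuousAt (f i) z)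
    (hpos : ∀ i ∈ s, 0 < f i z) :
    (fun w => ∏ i ∈ s, f i w ^ lam i) =ᶠ[𝓝 z]
      fun w => Real.exp (∑ i ∈ s, lam i * Real.log (f i w)) := by
  have hpos_near : ∀ᶠ w in 𝓝 z, ∀ i ∈ s, 0 < f i w :=
    (eventually_all_finset s).2 fun i hi => (hf i hi).eventually (lt_mem_nhds (hpos i hi))
  filter_upwards [hpos_near] with w hw
  rw [Real.exp_sum]
  exact prod_congr rfl fun i hi => by rw [Real.rpow_def_of_pos (hw i hi), mul_comm]

section ProdRpow

variable {E ι : Type*} [NormedAddCommGroup E] [NormedSpace ℝ E]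
  {s : Finset ι} {f : ι → E → ℝ} {f' : ι → E →L[ℝ] ℝ} {z : E} {lam : ι → ℝ}

theorem HasFDerivAt.finset_prod_rpow_const (hf : ∀ i ∈ s, HasFDerivAt (f i) (f' i) z)
    (hpos : ∀ i ∈ s, 0 < f i z) :
    HasFDerivAt (fun w => ∏ i ∈ s, f i w ^ lam i)
      ((∏ i ∈ s, f i z ^ lam i) • ∑ i ∈ s, (lam i / f i z) • f' i) z := by
  have hlog : HasFDerivAt (fun w => ∑ i ∈ s, lam i * Real.log (f i w))
      (∑ i ∈ s, (lam i / f i z) • f' i) z :=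
    HasFDerivAt.fun_sum fun i hi => by
      simpa only [div_eq_mul_inv, mul_smul] using
        ((hf i hi).log (hpos i hi).ne').const_mul (lam i)
  have hexp := prod_rpow_eventuallyEq_exp_sum_log (lam := lam)
    (fun i hi => (hf i hi).continuousAt) hpos
  rw [hexp.eq_of_nhds]
  exact hlog.exp.congr_of_eventuallyEq hexp

theorem HasFDerivAt.finset_prod_rpow_const_apply_of_cofactor
    (hf : ∀ i ∈ s, HasFDerivAt (f i) (f' i) z) (hpos : ∀ i ∈ s, 0 < f i z)
    {v : E} {K : ι → ℝ} (hcof : ∀ i ∈ s, f' i v = K i * f i z) :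
    fderiv ℝ (fun w => ∏ i ∈ s, f i w ^ lam i) z v =
      (∏ i ∈ s, f i z ^ lam i) * ∑ i ∈ s, lam i * K i := by
  rw [(HasFDerivAt.finset_prod_rpow_const hf hpos).fderiv]
  simp only [smul_apply, FunLike.coe_sum, Finset.sum_apply, smul_eq_mul]
  congr 1
  refine sum_congr rfl fun i hi => ?_
  rw [hcof i hi]
  field_simp [(hpos i hi).ne']

end ProdRpow

theorem ContinuousLinearMap.apply_mk_eq_mul_add_mul (L : ℝ × ℝ →L[ℝ] ℝ) (a b : ℝ) :
    L (a, b) = a * L (1, 0) + b * L (0, 1) := by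
  rw [← smul_eq_mul, ← smul_eq_mul, ← map_smul, ← map_smul, ← map_add]
  simp

theorem darboux_first_integral_criterion_general
    (U : Set (ℝ × ℝ)) (P Q : ℝ × ℝ → ℝ)
    (p : ℕ) (f K : Fin p → ℝ × ℝ → ℝ)
    (hfd : ∀ i, ∀ z ∈ U, DifferentiableAt ℝ (f i) z)
    (hfpos : ∀ i, ∀ z ∈ U, 0 < f i z)
    (hcof : ∀ i, ∀ z ∈ U,
      P z * fderiv ℝ (f i) z (1, 0) + Q z * fderiv ℝ (f i) z (0, 1) = K i z * f i z)
    (lam : Fin p → ℝ) :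
    (∀ z ∈ U, ∑ i, lam i * K i z = 0) ↔
      (∀ z ∈ U,
        P z * fderiv ℝ (fun w => ∏ i, f i w ^ lam i) z (1, 0) +
          Q z * fderiv ℝ (fun w => ∏ i, f i w ^ lam i) z (0, 1) = 0) := by
  refine forall₂_congr fun z hz => ?_
  have hF : P z * fderiv ℝ (fun w => ∏ i, f i w ^ lam i) z (1, 0) +
      Q z * fderiv ℝ (fun w => ∏ i, f i w ^ lam i) z (0, 1) =
        (∏ i, f i z ^ lam i) * ∑ i, lam i * K i z := by
    rw [← ContinuousLinearMap.apply_mk_eq_mul_add_mul]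
    exact HasFDerivAt.finset_prod_rpow_const_apply_of_cofactor
      (fun i _ => (hfd i z hz).hasFDerivAt) (fun i _ => hfpos i z hz)
      (fun i _ => by rw [ContinuousLinearMap.apply_mk_eq_mul_add_mul, hcof i z hz])
  have hF_pos : 0 < ∏ i, f i z ^ lam i :=
    prod_pos fun i _ => Real.rpow_pos_of_pos (hfpos i z hz) _
  rw [hF, mul_eq_zero, or_iff_right hF_pos.ne']

/-- Darboux criterion for first integrals: if `fᵢ > 0` are differentiable on an open
set `U` with cofactors `Kᵢ` for the vector field `(P, Q)`, and `F = ∏ fᵢ^(λᵢ)`, then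
`∑ λᵢ Kᵢ = 0` on `U` iff `P ∂F/∂x + Q ∂F/∂y = 0` on `U`. -/
theorem darboux_first_integral_criterion
    (U : Set (ℝ × ℝ)) (hU : IsOpen U) (P Q : ℝ × ℝ → ℝ)
    (hP : ContinuousOn P U) (hQ : ContinuousOn Q U)
    (p : ℕ) (f K : Fin p → ℝ × ℝ → ℝ)
    (hfd : ∀ i, ∀ z ∈ U, DifferentiableAt ℝ (f i) z)
    (hfpos : ∀ i, ∀ z ∈ U, 0 < f i z)
    (hcof : ∀ i, ∀ z ∈ U,
      P z * fderiv ℝ (f i) z (1, 0) + Q z * fderiv ℝ (f i) z (0, 1) = K i z * f i z)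
    (lam : Fin p → ℝ) :
    (∀ z ∈ U, ∑ i, lam i * K i z = 0) ↔
      (∀ z ∈ U,
        P z * fderiv ℝ (fun w => ∏ i, f i w ^ lam i) z (1, 0) +
          Q z * fderiv ℝ (fun w => ∏ i, f i w ^ lam i) z (0, 1) = 0) :=
  darboux_first_integral_criterion_general U P Q p f K hfd hfpos hcof lam
end

section
/- For c = 1/2 and b = −1/4, the product of the two Darboux invariants I₁ = x^{−1/2}(y² + 4x)e^{−t/2} and I₂ = x^{−1/2}((y−2)² + 4x)e^{t/2} is, up to the identity x^{2b} = x^{−1/2}, a function of the Darboux first integral: for all x > 0 and y ∈ ℝ and t ∈ ℝ, (x^{−1/2}(y² + 4x)·e^{−t/2})·(x^{−1/2}((y−2)² + 4x)·e^{t/2}) = x^{−1}·(y² + 4x)·((y−2)² + 4x); moreover, for any solution (x(t), y(t)) of the system ẋ = x(1−y), ẏ = −(1/4)y² + (1/2)y + x on an open interval I with x(t) > 0, the function t ↦ x(t)^{−1}·(y(t)² + 4x(t))·((y(t)−2)² + 4x(t)) is constant on I. -/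
/-!
`y² + 4x`, `(y - 2)² + 4x` and `x` are Darboux functions of the system, with cofactors
`1 - y/2`, `-y/2` and `1 - y`. The first two cofactors add up to the third, so
`(y² + 4x)((y - 2)² + 4x)/x` has zero derivative along every solution and is therefore constant
on any interval. The product of the two invariants is the same expression, because the factors
`x^(-1/2)` combine to `x⁻¹` and the exponentials cancel.
-/

open Real

theorem IsPreconnected.eq_of_forall_hasDerivAt_zero_s19 {I : Set ℝ} (hI : IsPreconnected I)
    {f : ℝ → ℝ} (hf : ∀ t ∈ I, HasDerivAt f 0 t) {a b : ℝ} (ha : a ∈ I) (hb : b ∈ I) :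
    f a = f b := by
  have h := Convex.norm_image_sub_le_of_norm_hasDerivWithin_le (C := 0)
    (fun t ht => (hf t ht).hasDerivWithinAt) (fun _ _ => norm_zero.le)
    (Real.convex_iff_isPreconnected.mpr hI) hb ha
  rw [zero_mul, norm_le_zero_iff, sub_eq_zero] at h
  exact h

/-- Darboux's principle: cofactors are additive under products and subtractive under quotients. -/
theorem hasDerivAt_mul_div_zero_of_cofactor_add {f g h : ℝ → ℝ} {a b c t : ℝ}
    (hf : HasDerivAt f (a * f t) t) (hg : HasDerivAt g (b * g t) t)
    (hh : HasDerivAt h (c * h t) t) (habc : a + b = c) (ht : h t ≠ 0) :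
    HasDerivAt (fun s => f s * g s / h s) 0 t := by
  refine ((hf.mul hg).div hh ht).congr_deriv ?_
  rw [← habc, Pi.mul_apply]
  field_simp
  ring

namespace BasenerRoss

variable {x y : ℝ → ℝ} {t : ℝ}

theorem hasDerivAt_sq_add_four_mul (hx : HasDerivAt x (x t * (1 - y t)) t)
    (hy : HasDerivAt y (-(1/4) * y t ^ 2 + (1/2) * y t + x t) t) :
    HasDerivAt (fun s => y s ^ 2 + 4 * x s) ((1 - y t / 2) * (y t ^ 2 + 4 * x t)) t := by
  refine ((hy.pow 2).add (hx.const_mul 4)).congr_deriv ?_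
  ring

theorem hasDerivAt_sub_two_sq_add_four_mul (hx : HasDerivAt x (x t * (1 - y t)) t)
    (hy : HasDerivAt y (-(1/4) * y t ^ 2 + (1/2) * y t + x t) t) :
    HasDerivAt (fun s => (y s - 2) ^ 2 + 4 * x s) (-(y t / 2) * ((y t - 2) ^ 2 + 4 * x t)) t := by
  refine (((hy.sub_const 2).pow 2).add (hx.const_mul 4)).congr_deriv ?_
  ring

theorem hasDerivAt_firstIntegral (hx : HasDerivAt x (x t * (1 - y t)) t)
    (hy : HasDerivAt y (-(1/4) * y t ^ 2 + (1/2) * y t + x t) t) (hxt : x t ≠ 0) :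
    HasDerivAt (fun s => (y s ^ 2 + 4 * x s) * ((y s - 2) ^ 2 + 4 * x s) / x s) 0 t :=
  hasDerivAt_mul_div_zero_of_cofactor_add (hasDerivAt_sq_add_four_mul hx hy)
    (hasDerivAt_sub_two_sq_add_four_mul hx hy) (hx.congr_deriv (mul_comm _ _))
    (by ring) hxt

end BasenerRoss

theorem basener_ross_product_of_invariants_general
    (I : Set ℝ) (hIconn : IsPreconnected I)
    (x y : ℝ → ℝ)
    (hx : ∀ t ∈ I, HasDerivAt x (x t * (1 - y t)) t)
    (hy : ∀ t ∈ I, HasDerivAt y (-(1/4) * y t ^ 2 + (1/2) * y t + x t) t)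
    (hxpos : ∀ t ∈ I, 0 < x t) :
    (∀ (X Y T : ℝ), 0 < X →
      (X ^ (-(1/2) : ℝ) * (Y ^ 2 + 4 * X) * Real.exp (-T / 2)) *
          (X ^ (-(1/2) : ℝ) * ((Y - 2) ^ 2 + 4 * X) * Real.exp (T / 2)) =
        X ^ (-1 : ℝ) * (Y ^ 2 + 4 * X) * ((Y - 2) ^ 2 + 4 * X)) ∧
      (∀ t ∈ I, ∀ t' ∈ I,
        x t ^ (-1 : ℝ) * (y t ^ 2 + 4 * x t) * ((y t - 2) ^ 2 + 4 * x t) =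
          x t' ^ (-1 : ℝ) * (y t' ^ 2 + 4 * x t') * ((y t' - 2) ^ 2 + 4 * x t')) := by
  refine ⟨fun X Y T hX => ?_, fun t ht t' ht' => ?_⟩
  · have hpow : X ^ (-(1/2) : ℝ) * X ^ (-(1/2) : ℝ) = X ^ (-1 : ℝ) := by
      rw [← rpow_add hX]
      norm_num
    have hexp : exp (-T / 2) * exp (T / 2) = 1 := by
      rw [← exp_add, neg_div, neg_add_cancel, exp_zero]
    linear_combination (Y ^ 2 + 4 * X) * ((Y - 2) ^ 2 + 4 * X) * exp (-T / 2) * exp (T / 2) * hpow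
      + (Y ^ 2 + 4 * X) * ((Y - 2) ^ 2 + 4 * X) * X ^ (-1 : ℝ) * hexp
  · simp only [rpow_neg_one, inv_mul_eq_div, div_mul_eq_mul_div]
    exact hIconn.eq_of_forall_hasDerivAt_zero_s19
      (fun s hs => BasenerRoss.hasDerivAt_firstIntegral (hx s hs) (hy s hs) (hxpos s hs).ne')
      ht ht'

/-- For `c = 1/2`, `b = −1/4`, the product of the Darboux invariants
`I₁ = x^(−1/2)(y²+4x)e^(−t/2)` and `I₂ = x^(−1/2)((y−2)²+4x)e^(t/2)` equals
`x^(−1)(y²+4x)((y−2)²+4x)`, a function of the Darboux first integral; in particular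
the latter is constant along every solution of `ẋ = x(1−y)`,
`ẏ = −(1/4)y² + (1/2)y + x` with `x > 0`. -/
theorem basener_ross_product_of_invariants
    (I : Set ℝ) (hIopen : IsOpen I) (hIconn : IsPreconnected I)
    (x y : ℝ → ℝ)
    (hx : ∀ t ∈ I, HasDerivAt x (x t * (1 - y t)) t)
    (hy : ∀ t ∈ I, HasDerivAt y (-(1/4) * y t ^ 2 + (1/2) * y t + x t) t)
    (hxpos : ∀ t ∈ I, 0 < x t) :
    (∀ (X Y T : ℝ), 0 < X →
      (X ^ (-(1/2) : ℝ) * (Y ^ 2 + 4 * X) * Real.exp (-T / 2)) *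
          (X ^ (-(1/2) : ℝ) * ((Y - 2) ^ 2 + 4 * X) * Real.exp (T / 2)) =
        X ^ (-1 : ℝ) * (Y ^ 2 + 4 * X) * ((Y - 2) ^ 2 + 4 * X)) ∧
      (∀ t ∈ I, ∀ t' ∈ I,
        x t ^ (-1 : ℝ) * (y t ^ 2 + 4 * x t) * ((y t - 2) ^ 2 + 4 * x t) =
          x t' ^ (-1 : ℝ) * (y t' ^ 2 + 4 * x t') * ((y t' - 2) ^ 2 + 4 * x t')) :=
  basener_ross_product_of_invariants_general I hIconn x y hx hy hxpos
end
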